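/- arXiv:2603.12462 — 9 statements merged into one kernel-verified Lean document; each statement's English description precedes it below -/
import Mathlib

section
/- For every integer n ≥ 2 and every real number p ∈ (0,1), one has (n-2)·(n^p - (n-1)^p)^{1/(1-p)} + 1 ≤ (n-1)^{p/(1-p)}. -/
/-!
Put `x = n - 1 ≥ 1`. By concavity of `t ↦ t ^ p`, `(x + 1) ^ p - x ^ p ≤ p x ^ (p - 1)`, and raising this
to the power `1 / (1 - p)` gives at most `p ^ (1 / (1 - p)) / x ≤ p / x`. So the left-hand side is at most
`1 + p (1 - x⁻¹)`, while `x ^ (p / (1 - p)) = exp (p / (1 - p) · log x) ≥ 1 + p / (1 - p) · (1 - x⁻¹)`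
and `p ≤ p / (1 - p)`.
-/

open Real

namespace Real

lemma rpow_add_le_rpow_add_mul_rpow_sub_one {x y p : ℝ} (hx : 0 < x) (hy : -x ≤ y)
    (hp0 : 0 ≤ p) (hp1 : p ≤ 1) :
    (x + y) ^ p ≤ x ^ p + p * x ^ (p - 1) * y := by
  have hyx : -1 ≤ y / x := by rwa [le_div_iff₀ hx, neg_one_mul]
  calc (x + y) ^ p = x ^ p * (1 + y / x) ^ p := by
        rw [← mul_rpow hx.le (by linarith), mul_add, mul_one, mul_div_cancel₀ _ hx.ne']
    _ ≤ x ^ p * (1 + p * (y / x)) :=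
        mul_le_mul_of_nonneg_left (rpow_one_add_le_one_add_mul_self hyx hp0 hp1) (by positivity)
    _ = x ^ p + p * x ^ (p - 1) * y := by
        rw [rpow_sub_one hx.ne']
        field_simp

lemma mul_rpow_sub_one_rpow_inv_one_sub_le {x p : ℝ} (hx : 0 < x) (hp0 : 0 < p) (hp1 : p < 1) :
    (p * x ^ (p - 1)) ^ (1 / (1 - p)) ≤ p / x := by
  have h1p : 0 < 1 - p := by linarith
  rw [mul_rpow hp0.le (by positivity), ← rpow_mul hx.le,
    show (p - 1) * (1 / (1 - p)) = -1 by field_simp; ring, rpow_neg_one, ← div_eq_mul_inv]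
  gcongr
  exact rpow_le_self_of_le_one hp0.le hp1.le ((one_le_div h1p).mpr (by linarith))

lemma one_add_mul_one_sub_inv_le_rpow {x q : ℝ} (hx : 0 < x) (hq : 0 ≤ q) :
    1 + q * (1 - x⁻¹) ≤ x ^ q :=
  calc 1 + q * (1 - x⁻¹) ≤ q * log x + 1 := by
        nlinarith [one_sub_inv_le_log_of_pos hx]
    _ ≤ x ^ q := by
        rw [rpow_def_of_pos hx, mul_comm (log x)]
        exact add_one_le_exp _

end Real

theorem stmt0 (n : ℕ) (hn : 2 ≤ n) (p : ℝ) (hp : 0 < p) (hp1 : p < 1) :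
    ((n : ℝ) - 2) * ((n : ℝ) ^ p - ((n : ℝ) - 1) ^ p) ^ (1 / (1 - p)) + 1
      ≤ ((n : ℝ) - 1) ^ (p / (1 - p)) := by
  set x : ℝ := (n : ℝ) - 1
  obtain ⟨hn_eq, hn2⟩ : (n : ℝ) = x + 1 ∧ (n : ℝ) - 2 = x - 1 := ⟨by ring, by ring⟩
  have hx1 : 1 ≤ x := by
    have : (2 : ℝ) ≤ n := by exact_mod_cast hn
    linarith
  have hx0 : 0 < x := by linarith
  have h1p : 0 < 1 - p := by linarith
  have hdiff : (n : ℝ) ^ p - x ^ p ≤ p * x ^ (p - 1) := by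
    have := rpow_add_le_rpow_add_mul_rpow_sub_one hx0 (by linarith : -x ≤ 1) hp.le hp1.le
    rw [hn_eq]
    linarith
  have hpow : ((n : ℝ) ^ p - x ^ p) ^ (1 / (1 - p)) ≤ p / x :=
    (rpow_le_rpow (sub_nonneg.mpr (rpow_le_rpow hx0.le (by linarith) hp.le)) hdiff
      (by positivity)).trans (mul_rpow_sub_one_rpow_inv_one_sub_le hx0 hp hp1)
  have hpq : p ≤ p / (1 - p) := by
    rw [le_div_iff₀ h1p]
    nlinarith
  have hinv : 0 ≤ 1 - x⁻¹ := sub_nonneg.mpr (inv_le_one_of_one_le₀ hx1)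
  rw [hn2]
  calc (x - 1) * ((n : ℝ) ^ p - x ^ p) ^ (1 / (1 - p)) + 1
      ≤ (x - 1) * (p / x) + 1 := by gcongr
    _ = 1 + p * (1 - x⁻¹) := by field_simp; ring
    _ ≤ 1 + p / (1 - p) * (1 - x⁻¹) := by gcongr
    _ ≤ x ^ (p / (1 - p)) := one_add_mul_one_sub_inv_le_rpow hx0 (by positivity)
end

section
/- For every integer n ≥ 2 and every real number p ∈ (0,1), one has (n^p - (n-1)^p)^{1/(1-p)} + 3^{-p/(1-p)}·((n-2)·n^p - (n-3)·(n-1)^p)^{1/(1-p)} ≤ (n-1)^{p/(1-p)}. -/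
/-!
Put `b = n - 1` and `x = (1 + 1/b)^p - 1`, so that `n^p = b^p (1 + x)` and, by Bernoulli's
inequality, `0 ≤ x` and `b x ≤ p`. Dividing by `b^(p/(1-p)) = (b^p)^q` with `q = 1/(1-p)`, the
claim becomes `x^q + (3^(-p) (1 + (b-1) x))^q ≤ 1`. Since `x ≤ p` and `log p ≤ p - 1`, we get
`x^(q-1) ≤ p^(p/(1-p)) ≤ e^(-p)`; also `3^(-p) ≤ e^(-p)`. Hence the left side is at most
`e^(-p) (x + 1 + (b-1) x) = e^(-p) (1 + b x) ≤ e^(-p) (1 + p) ≤ 1`.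
-/

open Real

lemma rpow_div_one_sub_le_exp_neg {p x : ℝ} (hp : 0 < p) (hp1 : p < 1) (hx : 0 ≤ x)
    (hxp : x ≤ p) : x ^ (p / (1 - p)) ≤ exp (-p) := by
  have ht : 0 ≤ p / (1 - p) := div_nonneg hp.le (by linarith)
  calc x ^ (p / (1 - p)) ≤ p ^ (p / (1 - p)) := rpow_le_rpow hx hxp ht
    _ = exp (log p * (p / (1 - p))) := rpow_def_of_pos hp _
    _ ≤ exp ((p - 1) * (p / (1 - p))) :=
        exp_le_exp.2 (mul_le_mul_of_nonneg_right (log_le_sub_one_of_pos hp) ht)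
    _ = exp (-p) := by
        congr 1
        field_simp [(by linarith : (1 - p) ≠ 0)]
        ring

lemma rpow_one_div_one_sub_le_exp_neg_mul {p x : ℝ} (hp : 0 < p) (hp1 : p < 1) (hx : 0 ≤ x)
    (hxp : x ≤ p) : x ^ (1 / (1 - p)) ≤ exp (-p) * x := by
  have hq : 1 / (1 - p) = p / (1 - p) + 1 := by
    field_simp [(by linarith : (1 - p) ≠ 0)]
    ring
  have hq0 : p / (1 - p) + 1 ≠ 0 := by
    have : 0 < p / (1 - p) := div_pos hp (by linarith)
    linarith
  rw [hq, rpow_add' hx hq0, rpow_one]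
  exact mul_le_mul_of_nonneg_right (rpow_div_one_sub_le_exp_neg hp hp1 hx hxp) hx

lemma three_rpow_neg_le_exp_neg {p : ℝ} (hp : 0 ≤ p) : (3 : ℝ) ^ (-p) ≤ exp (-p) := by
  rw [← exp_one_rpow]
  exact rpow_le_rpow_of_nonpos (exp_pos 1) exp_one_lt_three.le (neg_nonpos.2 hp)

lemma exp_neg_mul_one_add_le_one (p : ℝ) : exp (-p) * (1 + p) ≤ 1 := by
  calc exp (-p) * (1 + p) ≤ exp (-p) * exp p :=
        mul_le_mul_of_nonneg_left (by linarith [add_one_le_exp p]) (exp_pos _).le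
    _ = 1 := by rw [← exp_add, neg_add_cancel, exp_zero]

lemma mul_one_add_inv_rpow_sub_one_le {b p : ℝ} (hb : 0 < b) (hp : 0 ≤ p) (hp1 : p ≤ 1) :
    b * ((1 + b⁻¹) ^ p - 1) ≤ p := by
  have hbern : (1 + b⁻¹) ^ p ≤ 1 + p * b⁻¹ :=
    rpow_one_add_le_one_add_mul_self (by linarith [inv_pos.2 hb]) hp hp1
  calc b * ((1 + b⁻¹) ^ p - 1) ≤ b * (p * b⁻¹) :=
        mul_le_mul_of_nonneg_left (by linarith) hb.le
    _ = p := by field_simp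

lemma rpow_add_rpow_le_one {b p x : ℝ} (hp : 0 < p) (hp1 : p < 1) (hb : 1 ≤ b) (hx : 0 ≤ x)
    (hbx : b * x ≤ p) :
    x ^ (1 / (1 - p)) + ((3 : ℝ) ^ (-p) * (1 + (b - 1) * x)) ^ (1 / (1 - p)) ≤ 1 := by
  set y := (3 : ℝ) ^ (-p) * (1 + (b - 1) * x)
  have hxp : x ≤ p := le_trans (by nlinarith) hbx
  have hCx : 0 ≤ 1 + (b - 1) * x := by nlinarith
  have hy0 : 0 ≤ y := mul_nonneg (by positivity) hCx
  have hy : y ≤ exp (-p) * (1 + (b - 1) * x) :=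
    mul_le_mul_of_nonneg_right (three_rpow_neg_le_exp_neg hp.le) hCx
  have hsum : exp (-p) * x + exp (-p) * (1 + (b - 1) * x) ≤ 1 := by
    have hbx' : exp (-p) * (1 + b * x) ≤ exp (-p) * (1 + p) := by gcongr
    linarith [exp_neg_mul_one_add_le_one p]
  have hy1 : y ≤ 1 := by linarith [mul_nonneg (exp_pos (-p)).le hx]
  have hq : 1 ≤ 1 / (1 - p) := by rw [le_div_iff₀ (by linarith)]; linarith
  linarith [rpow_one_div_one_sub_le_exp_neg_mul hp hp1 hx hxp, rpow_le_self_of_le_one hy0 hy1 hq]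

theorem stmt1 (n : ℕ) (hn : 2 ≤ n) (p : ℝ) (hp : 0 < p) (hp1 : p < 1) :
    ((n : ℝ) ^ p - ((n : ℝ) - 1) ^ p) ^ (1 / (1 - p))
      + (3 : ℝ) ^ (-p / (1 - p))
        * (((n : ℝ) - 2) * (n : ℝ) ^ p - ((n : ℝ) - 3) * ((n : ℝ) - 1) ^ p) ^ (1 / (1 - p))
      ≤ ((n : ℝ) - 1) ^ (p / (1 - p)) := by
  have hb : (1 : ℝ) ≤ n - 1 := by
    have : (2 : ℝ) ≤ n := by exact_mod_cast hn
    linarith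
  set b : ℝ := n - 1 with hb_def
  have hb0 : 0 < b := by linarith
  have hn_pow : (n : ℝ) ^ p = b ^ p * (1 + b⁻¹) ^ p := by
    rw [← mul_rpow hb0.le (by positivity), mul_add, mul_inv_cancel₀ hb0.ne', hb_def]
    ring_nf
  set x := (1 + b⁻¹) ^ p - 1
  have hx : 0 ≤ x := sub_nonneg.2 (one_le_rpow (by linarith [inv_pos.2 hb0]) hp.le)
  have hA : (n : ℝ) ^ p - b ^ p = b ^ p * x := by rw [hn_pow]; ring
  have hC : ((n : ℝ) - 2) * (n : ℝ) ^ p - ((n : ℝ) - 3) * b ^ p = b ^ p * (1 + (b - 1) * x) := by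
    rw [hn_pow, hb_def]; ring
  have h3 : (3 : ℝ) ^ (-p / (1 - p)) = ((3 : ℝ) ^ (-p)) ^ (1 / (1 - p)) := by
    rw [← rpow_mul (by norm_num)]; ring_nf
  have hB : b ^ (p / (1 - p)) = (b ^ p) ^ (1 / (1 - p)) := by
    rw [← rpow_mul hb0.le]; ring_nf
  have key := rpow_add_rpow_le_one hp hp1 hb hx (mul_one_add_inv_rpow_sub_one_le hb0 hp.le hp1.le)
  have hCx : 0 ≤ 1 + (b - 1) * x := by nlinarith
  rw [hA, hC, h3, hB]
  calc _ = (b ^ p) ^ (1 / (1 - p)) * (x ^ (1 / (1 - p))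
          + ((3 : ℝ) ^ (-p) * (1 + (b - 1) * x)) ^ (1 / (1 - p))) := by
        rw [mul_rpow (by positivity) hx, mul_rpow (by positivity) hCx,
          mul_rpow (by positivity) hCx]
        ring
    _ ≤ (b ^ p) ^ (1 / (1 - p)) := mul_le_of_le_one_right (by positivity) key
end

section
/- For every real p ∈ (0,1) the function F_p(x) = (x-1)^{1/(1-p)} - p^{1/(1-p)}·(x-2) - x + 1 is nonnegative on [2,∞). -/
/-! With `q = 1/(1-p) ≥ 1`, Bernoulli's inequality gives `(x-1)^q ≥ 1 + q(x-2)`, so the expression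
is at least `(x-2)(q - 1 - p^q)`; this is nonnegative because `p^q ≤ p ≤ p/(1-p) = q - 1`. -/

open Real

lemma mul_sub_two_add_sub_one_le_rpow {q c x : ℝ} (hq : 1 ≤ q) (hc : c ≤ q - 1) (hx : 2 ≤ x) :
    c * (x - 2) + (x - 1) ≤ (x - 1) ^ q := by
  have bernoulli : 1 + q * (x - 2) ≤ (x - 1) ^ q := by
    convert one_add_mul_self_le_rpow_one_add (s := x - 2) (by linarith) hq using 2
    ring
  nlinarith [mul_nonneg (sub_nonneg.2 hc) (sub_nonneg.2 hx)]

lemma le_one_div_one_sub_sub_one {p : ℝ} (hp : 0 ≤ p) (hp1 : p < 1) : p ≤ 1 / (1 - p) - 1 := by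
  rw [le_sub_iff_add_le, le_div_iff₀ (by linarith)]
  nlinarith

theorem stmt3 (p : ℝ) (hp : 0 < p) (hp1 : p < 1) (x : ℝ) (hx : 2 ≤ x) :
    0 ≤ (x - 1) ^ (1 / (1 - p)) - p ^ (1 / (1 - p)) * (x - 2) - x + 1 := by
  have hp_le := le_one_div_one_sub_sub_one hp.le hp1
  have hq : 1 ≤ 1 / (1 - p) := by linarith
  have hpq : p ^ (1 / (1 - p)) ≤ 1 / (1 - p) - 1 :=
    (rpow_le_self_of_le_one hp.le hp1.le hq).trans hp_le
  linarith [mul_sub_two_add_sub_one_le_rpow hq hpq hx]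
end

section
/- For every real p ∈ (0,1) the function G_p(x) = (x-1)^{1/(1-p)} - ((p·x + x - 2p - 1)/3^p)^{1/(1-p)} - p^{1/(1-p)} is nonnegative on [2,∞). -/
/-!
Write `q = 1/(1-p) ≥ 1`, `c = (1+p)/3^p` and `d = p/3^p`, so that `(p x + x - 2p - 1)/3^p = c(x-1) - d`.
Since `3^p ≥ e^p ≥ 1 + p` we have `c ≤ 1`, and then `s ↦ s^q - (c s - d)^q` is monotone wherever
`c s - d ≥ 0`: its derivative is `q (s^(q-1) - c (c s - d)^(q-1)) ≥ 0`. Hence `G_p(x) ≥ G_p(2) = 1 - 3^(-pq) - p^q`,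
and this is nonnegative because `p^q ≤ p` and `3^(-pq) ≤ e^(-p/(1-p)) ≤ 1 - p`, the last step being
`log y ≥ 1 - 1/y` at `y = 1 - p`.
-/

open Real Set

lemma exp_le_three_rpow {t : ℝ} (ht : 0 ≤ t) : exp t ≤ (3 : ℝ) ^ t := by
  have hlog : 1 ≤ log 3 := (le_log_iff_exp_le (by norm_num)).2 exp_one_lt_three.le
  rw [rpow_def_of_pos (by norm_num)]
  exact exp_le_exp.2 (le_mul_of_one_le_left ht hlog)

lemma one_add_le_three_rpow {p : ℝ} (hp : 0 ≤ p) : 1 + p ≤ (3 : ℝ) ^ p := by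
  linarith [add_one_le_exp p, exp_le_three_rpow hp]

lemma three_rpow_neg_div_one_sub_le {p : ℝ} (hp : 0 ≤ p) (hp1 : p < 1) :
    (3 : ℝ) ^ (-(p / (1 - p))) ≤ 1 - p := by
  have h1p : 0 < 1 - p := by linarith
  have hlog : -(p / (1 - p)) ≤ log (1 - p) := by
    convert one_sub_inv_le_log_of_pos h1p using 1
    field_simp
    ring
  calc (3 : ℝ) ^ (-(p / (1 - p))) = ((3 : ℝ) ^ (p / (1 - p)))⁻¹ := rpow_neg (by norm_num) _
    _ ≤ (exp (p / (1 - p)))⁻¹ := inv_anti₀ (exp_pos _) (exp_le_three_rpow (by positivity))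
    _ = exp (-(p / (1 - p))) := (exp_neg _).symm
    _ ≤ 1 - p := (le_log_iff_exp_le h1p).1 hlog

lemma monotoneOn_rpow_sub_rpow_affine {q c d : ℝ} (hq : 1 ≤ q) (hc : 0 < c) (hc1 : c ≤ 1)
    (hd : 0 ≤ d) : MonotoneOn (fun s : ℝ => s ^ q - (c * s - d) ^ q) (Ici (d / c)) := by
  have hderiv (s : ℝ) : HasDerivAt (fun s : ℝ => s ^ q - (c * s - d) ^ q)
      (q * s ^ (q - 1) - c * q * (c * s - d) ^ (q - 1)) s := by
    have h := ((hasDerivAt_id s).rpow_const (Or.inr hq)).sub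
      (((hasDerivAt_id s).const_mul c |>.sub_const d).rpow_const (Or.inr hq))
    simp only [id, one_mul, mul_one] at h
    exact h
  have hdiff : Differentiable ℝ (fun s : ℝ => s ^ q - (c * s - d) ^ q) :=
    fun s => (hderiv s).differentiableAt
  refine monotoneOn_of_deriv_nonneg (convex_Ici _) hdiff.continuous.continuousOn
    hdiff.differentiableOn fun s hs => ?_
  rw [interior_Ici, mem_Ioi, div_lt_iff₀ hc] at hs
  have hu : 0 ≤ c * s - d := by linarith
  have hs0 : 0 < s := by nlinarith
  have hpow : c * (c * s - d) ^ (q - 1) ≤ s ^ (q - 1) :=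
    calc c * (c * s - d) ^ (q - 1) ≤ 1 * s ^ (q - 1) :=
          mul_le_mul hc1 (rpow_le_rpow hu (by nlinarith) (by linarith))
            (rpow_nonneg hu _) zero_le_one
      _ = s ^ (q - 1) := one_mul _
  rw [(hderiv s).deriv]
  nlinarith [mul_le_mul_of_nonneg_left hpow (by linarith : (0 : ℝ) ≤ q)]

theorem stmt6 (p : ℝ) (hp : 0 < p) (hp1 : p < 1) (x : ℝ) (hx : 2 ≤ x) :
    0 ≤ (x - 1) ^ (1 / (1 - p))
        - ((p * x + x - 2 * p - 1) / 3 ^ p) ^ (1 / (1 - p))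
        - p ^ (1 / (1 - p)) := by
  have h1p : 0 < 1 - p := by linarith
  have h3p : 0 < (3 : ℝ) ^ p := by positivity
  set q := 1 / (1 - p) with hq_def
  have hq : 1 ≤ q := by rw [hq_def, le_div_iff₀ h1p]; linarith
  have hc1 : (1 + p) / 3 ^ p ≤ 1 := (div_le_one h3p).2 (one_add_le_three_rpow hp.le)
  have hdc : p / 3 ^ p / ((1 + p) / 3 ^ p) ≤ 1 := by
    rw [div_div_div_cancel_right₀ h3p.ne', div_le_one (by linarith)]; linarith
  have hmono := monotoneOn_rpow_sub_rpow_affine hq (by positivity) hc1 (by positivity)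
    (mem_Ici.2 hdc) (mem_Ici.2 (by linarith : p / 3 ^ p / ((1 + p) / 3 ^ p) ≤ x - 1))
    (by linarith : (1 : ℝ) ≤ x - 1)
  have hat_one : (1 + p) / 3 ^ p * 1 - p / 3 ^ p = (3 : ℝ) ^ (-p) := by
    rw [rpow_neg (by norm_num)]; field_simp; ring
  have hvalue : ((3 : ℝ) ^ (-p)) ^ q = 3 ^ (-(p / (1 - p))) := by
    rw [← rpow_mul (by norm_num), hq_def]; ring_nf
  have haffine : (1 + p) / 3 ^ p * (x - 1) - p / 3 ^ p = (p * x + x - 2 * p - 1) / 3 ^ p := by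
    field_simp; ring
  simp only [hat_one, hvalue, haffine, one_rpow] at hmono
  linarith [three_rpow_neg_div_one_sub_le hp.le hp1, rpow_le_self_of_le_one hp.le hp1.le hq]
end

section
/- Let 2 ≤ r < n be integers, p ∈ (0,1), and let u ≥ 0, x_{r+1},…,x_n ≥ 0 and y_1,…,y_{r-1} ≥ u be real numbers satisfying Σ_{i=r+1}^n x_i + n·u = Σ_{i=1}^{r-1} y_i. Then Σ_{i=r+1}^n x_i^p + (r-1)·u^p ≤ (1 - 1/n)^p · (Σ_{i=r+1}^n x_i^p + Σ_{i=1}^{r-1} y_i^p). -/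
open Finset Real

/-!
Put `c = (1 - 1/n)^p`, `w = c⁻¹ - 1 ≤ p/(n-1)` (Bernoulli), `A = ∑ xᵢ` and
`M = A + (n - r + 2) u`. Since the `yᵢ` are all `≥ u` with prescribed sum, concavity of
`t ↦ t^p` gives `∑ yᵢ^p ≥ (r - 2) u^p + M^p` (all but one `yᵢ` pushed down to `u`), and
`∑ xᵢ^p ≤ (n - r)^(1-p) A^p`. Since `c (1 + w) = 1`, the claim then reduces to
`w (n - r)^(1-p) A^p + (1 + (r - 1) w) u^p ≤ M^p`, an instance of Hölder's inequality for the
two terms `A` and `(n - r + 2) u` as soon as the weights `a, b` satisfy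
`a^(1/(1-p)) + b^(1/(1-p)) ≤ 1`. That numerical condition is checked on logarithms; it only
just holds, through `log (n - r + 2) ≥ log 3 > 1`.
-/

theorem sum_mul_rpow_le_of_lt_one {ι : Type*} (s : Finset ι) {a t : ι → ℝ} {p : ℝ}
    (hp0 : 0 < p) (hp1 : p < 1) (ha : ∀ i ∈ s, 0 ≤ a i) (ht : ∀ i ∈ s, 0 ≤ t i) :
    ∑ i ∈ s, a i * t i ^ p ≤ (∑ i ∈ s, a i ^ (1 - p)⁻¹) ^ (1 - p) * (∑ i ∈ s, t i) ^ p := by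
  have h := inner_le_Lp_mul_Lq_of_nonneg s (HolderConjugate.one_sub_inv_inv hp0 hp1) ha
    (fun i hi => rpow_nonneg (ht i hi) p)
  have htp : ∀ i ∈ s, (t i ^ p) ^ p⁻¹ = t i := fun i hi => rpow_rpow_inv (ht i hi) hp0.ne'
  simpa [sum_congr rfl htp] using h

theorem sum_rpow_le_card_rpow_mul_sum_rpow {ι : Type*} (s : Finset ι) {t : ι → ℝ} {p : ℝ}
    (hp0 : 0 < p) (hp1 : p < 1) (ht : ∀ i ∈ s, 0 ≤ t i) :
    ∑ i ∈ s, t i ^ p ≤ (#s : ℝ) ^ (1 - p) * (∑ i ∈ s, t i) ^ p := by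
  simpa using sum_mul_rpow_le_of_lt_one s (a := fun _ => 1) hp0 hp1 (fun _ _ => zero_le_one) ht

theorem mul_rpow_add_mul_rpow_le {a b α β p : ℝ} (hp0 : 0 < p) (hp1 : p < 1)
    (ha : 0 ≤ a) (hb : 0 ≤ b) (hα : 0 ≤ α) (hβ : 0 ≤ β)
    (hab : a ^ (1 - p)⁻¹ + b ^ (1 - p)⁻¹ ≤ 1) :
    a * α ^ p + b * β ^ p ≤ (α + β) ^ p := by
  have h := sum_mul_rpow_le_of_lt_one univ (a := ![a, b]) (t := ![α, β]) hp0 hp1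
    (by simp [Fin.forall_fin_two, ha, hb]) (by simp [Fin.forall_fin_two, hα, hβ])
  simp only [Fin.sum_univ_two, Matrix.cons_val_zero, Matrix.cons_val_one] at h
  refine h.trans (mul_le_of_le_one_left (by positivity) ?_)
  exact rpow_le_one (by positivity) hab (by linarith)

theorem ConcaveOn.sub_mul_add_sub_mul_le {s : Set ℝ} {f : ℝ → ℝ} (hf : ConcaveOn ℝ s f)
    {a b y : ℝ} (ha : a ∈ s) (hb : b ∈ s) (hay : a ≤ y) (hyb : y ≤ b) :
    (b - y) * f a + (y - a) * f b ≤ (b - a) * f y := by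
  rcases hay.eq_or_lt with rfl | hay
  · ring_nf; rfl
  rcases hyb.eq_or_lt with rfl | hyb
  · ring_nf; rfl
  have := hf.neg.secant_mono_aux1 ha hb hay hyb
  simp only [Pi.neg_apply] at this
  linarith

theorem ConcaveOn.mul_add_le_sum {ι : Type*} {f : ℝ → ℝ} {a b : ℝ}
    (hf : ConcaveOn ℝ (Set.Icc a b) f) {s : Finset ι} {y : ι → ℝ} {k : ℕ} (hs : #s = k + 1)
    (hy : ∀ i ∈ s, a ≤ y i) (hsum : ∑ i ∈ s, y i = k * a + b) :
    k * f a + f b ≤ ∑ i ∈ s, f (y i) := by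
  have hyb : ∀ i ∈ s, y i ≤ b := by
    classical
    intro i hi
    have hrest : #(s.erase i) • a ≤ ∑ j ∈ s.erase i, y j :=
      card_nsmul_le_sum _ _ _ fun j hj => hy j (mem_of_mem_erase hj)
    rw [card_erase_of_mem hi, hs, nsmul_eq_mul] at hrest
    have := add_sum_erase s y hi
    push_cast at hrest
    linarith
  obtain ⟨i₀, hi₀⟩ : s.Nonempty := card_pos.1 (by omega)
  rcases (hy i₀ hi₀ |>.trans (hyb i₀ hi₀)).eq_or_lt with rfl | hab
  · have : ∀ i ∈ s, y i = a := fun i hi => le_antisymm (hyb i hi) (hy i hi)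
    rw [sum_congr rfl fun i hi => by rw [this i hi], sum_const, hs, nsmul_eq_mul]
    push_cast; ring_nf; rfl
  have hchord : ∀ i ∈ s, (b - y i) * f a + (y i - a) * f b ≤ (b - a) * f (y i) :=
    fun i hi => hf.sub_mul_add_sub_mul_le (Set.left_mem_Icc.2 hab.le)
      (Set.right_mem_Icc.2 hab.le) (hy i hi) (hyb i hi)
  have hsum' := sum_le_sum hchord
  rw [← mul_sum, sum_add_distrib, ← sum_mul, ← sum_mul, sum_sub_distrib, sum_sub_distrib,
    sum_const, sum_const, hs, nsmul_eq_mul, nsmul_eq_mul, hsum] at hsum'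
  push_cast at hsum'
  have : (b - a) * (k * f a + f b) ≤ (b - a) * ∑ i ∈ s, f (y i) := by linarith
  exact le_of_mul_le_mul_left this (by linarith)

theorem mul_rpow_add_div_rpow_rpow_le_one {m j p w : ℝ} (hp0 : 0 < p) (hp1 : p < 1)
    (hm : 1 ≤ m) (hj : 0 ≤ j) (hw0 : 0 ≤ w) (hw : w ≤ p / (m + j)) :
    m * w ^ (1 - p)⁻¹ + ((1 + j * w) / (m + 2) ^ p) ^ (1 - p)⁻¹ ≤ 1 := by
  have h1p : 0 < 1 - p := sub_pos.2 hp1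
  have hmj : 0 < m + j := by linarith
  set W := w ^ (p / (1 - p))
  have hγ : m * w ^ (1 - p)⁻¹ = m * w * W := by
    have hq : (1 - p)⁻¹ = 1 + p / (1 - p) := by field_simp; ring
    rw [mul_assoc, ← rpow_one_add' hw0 (by rw [← hq]; positivity), hq]
  set γ := m * w ^ (1 - p)⁻¹
  set P := p * m / (m + j) with hPdef
  have hW0 : 0 ≤ W := by positivity
  have hW1 : W ≤ 1 :=
    rpow_le_one hw0 (hw.trans ((div_le_one hmj).2 (by linarith))) (by positivity)
  have hmw : m * w ≤ P := by
    rw [hPdef, mul_comm p, mul_div_assoc]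
    exact mul_le_mul_of_nonneg_left hw (by linarith)
  have hPp : P ≤ p := by
    rw [hPdef, div_le_iff₀ hmj]; nlinarith
  have hγW : γ ≤ P * W := hγ ▸ mul_le_mul_of_nonneg_right hmw hW0
  have hγpW : γ ≤ p * W := hγW.trans (mul_le_mul_of_nonneg_right hPp hW0)
  have hγlt : γ < 1 := by nlinarith
  -- `(1 - p) W + γ ≤ W ≤ 1` is what makes the loss in `log (1 - γ)` affordable
  have hγ1 : (1 - p) * γ ≤ P * (1 - γ) := by
    have : (1 - p) * W ≤ 1 - γ := by linarith
    calc (1 - p) * γ ≤ P * ((1 - p) * W) := by nlinarith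
      _ ≤ P * (1 - γ) := mul_le_mul_of_nonneg_left this (by positivity)
  have hγ0 : 0 < 1 - γ := sub_pos.2 hγlt
  have hlogγ : -P ≤ (1 - p) * log (1 - γ) := by
    have hlog := one_sub_inv_le_log_of_pos hγ0
    have hdiv : (1 - p) * γ / (1 - γ) ≤ P := (div_le_iff₀ hγ0).2 hγ1
    rw [show 1 - (1 - γ)⁻¹ = -(γ / (1 - γ)) by field_simp; ring] at hlog
    calc -P ≤ (1 - p) * -(γ / (1 - γ)) := by rw [mul_neg, ← mul_div_assoc]; linarith
      _ ≤ (1 - p) * log (1 - γ) := mul_le_mul_of_nonneg_left hlog h1p.le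
  have hlogm : 1 ≤ log (m + 2) := by
    rw [le_log_iff_exp_le (by linarith)]
    linarith [exp_one_lt_d9]
  have hlogj : log (1 + j * w) ≤ p - P := by
    have hjw : j * w ≤ p - P := by
      rw [show p - P = j * (p / (m + j)) by rw [hPdef]; field_simp; ring]
      exact mul_le_mul_of_nonneg_left hw hj
    linarith [log_le_sub_one_of_pos (show 0 < 1 + j * w by positivity)]
  have hmain : 1 + j * w ≤ (1 - γ) ^ (1 - p) * (m + 2) ^ p := by
    rw [← log_le_log_iff (by positivity) (by positivity),
      log_mul (by positivity) (by positivity), log_rpow hγ0, log_rpow (by linarith)]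
    nlinarith
  have hb : (1 + j * w) / (m + 2) ^ p ≤ (1 - γ) ^ (1 - p) :=
    (div_le_iff₀ (by positivity)).2 hmain
  have := rpow_le_rpow (by positivity) hb (inv_nonneg.2 h1p.le)
  rw [rpow_rpow_inv hγ0.le h1p.ne'] at this
  linarith

theorem mul_rpow_add_mul_rpow_le_add_mul_rpow {m j p w A u : ℝ} (hp0 : 0 < p) (hp1 : p < 1)
    (hm : 1 ≤ m) (hj : 0 ≤ j) (hw0 : 0 ≤ w) (hw : w ≤ p / (m + j)) (hA : 0 ≤ A) (hu : 0 ≤ u) :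
    w * m ^ (1 - p) * A ^ p + (1 + j * w) * u ^ p ≤ (A + (m + 2) * u) ^ p := by
  have hm2 : 0 < (m + 2) ^ p := by positivity
  have hweights : (w * m ^ (1 - p)) ^ (1 - p)⁻¹ = m * w ^ (1 - p)⁻¹ := by
    rw [mul_rpow hw0 (by positivity), rpow_rpow_inv (by linarith) (by linarith), mul_comm]
  have h := mul_rpow_add_mul_rpow_le hp0 hp1 (by positivity) (by positivity) hA
    (by positivity : 0 ≤ (m + 2) * u)
    (hweights ▸ mul_rpow_add_div_rpow_rpow_le_one hp0 hp1 hm hj hw0 hw)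
  rwa [mul_rpow (by linarith) hu, ← mul_assoc, div_mul_cancel₀ _ hm2.ne'] at h

theorem inv_one_sub_inv_rpow_le {n p : ℝ} (hn : 1 < n) (hp0 : 0 ≤ p) (hp1 : p ≤ 1) :
    ((1 - 1 / n) ^ p)⁻¹ ≤ 1 + p / (n - 1) := by
  have h : (1 - 1 / n)⁻¹ = 1 + 1 / (n - 1) := by
    have : n - 1 ≠ 0 := by linarith
    field_simp; ring
  rw [← inv_rpow (by rw [sub_nonneg, div_le_one] <;> linarith), h, ← mul_one_div p]
  exact rpow_one_add_le_one_add_mul_self (by linarith [one_div_pos.2 (sub_pos.2 hn)]) hp0 hp1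

theorem stmt10 (n r : ℕ) (hr : 2 ≤ r) (hrn : r < n) (p : ℝ) (hp : 0 < p) (hp1 : p < 1)
    (u : ℝ) (hu : 0 ≤ u) (x y : ℕ → ℝ)
    (hx : ∀ i ∈ Icc (r + 1) n, 0 ≤ x i)
    (hy : ∀ i ∈ Icc 1 (r - 1), u ≤ y i)
    (hsum : ∑ i ∈ Icc (r + 1) n, x i + n * u = ∑ i ∈ Icc 1 (r - 1), y i) :
    ∑ i ∈ Icc (r + 1) n, x i ^ p + ((r : ℝ) - 1) * u ^ p
      ≤ (1 - 1 / (n : ℝ)) ^ p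
        * (∑ i ∈ Icc (r + 1) n, x i ^ p + ∑ i ∈ Icc 1 (r - 1), y i ^ p) := by
  have hr' : (2 : ℝ) ≤ r := by exact_mod_cast hr
  have hrn' : (r : ℝ) + 1 ≤ n := by exact_mod_cast hrn
  have hn : (1 : ℝ) < n := by linarith
  have hlam : 0 < 1 - 1 / (n : ℝ) := by rw [sub_pos, div_lt_one] <;> linarith
  set c := (1 - 1 / (n : ℝ)) ^ p
  set w := c⁻¹ - 1
  have hc0 : 0 < c := rpow_pos_of_pos hlam p
  have hcw : c * (1 + w) = 1 := by rw [add_sub_cancel, mul_inv_cancel₀ hc0.ne']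
  have hw0 : 0 ≤ w := by
    rw [sub_nonneg, one_le_inv₀ hc0]
    exact rpow_le_one hlam.le (by linarith [one_div_pos.2 (by linarith : (0 : ℝ) < n)]) hp.le
  have hw : w ≤ p / (((n : ℝ) - r) + (r - 1)) := by
    rw [sub_add_sub_cancel]
    linarith [inv_one_sub_inv_rpow_le hn hp.le hp1.le]
  set A := ∑ i ∈ Icc (r + 1) n, x i
  set S := ∑ i ∈ Icc (r + 1) n, x i ^ p
  set T := ∑ i ∈ Icc 1 (r - 1), y i ^ p
  have hA : 0 ≤ A := sum_nonneg hx
  have hS : S ≤ ((n : ℝ) - r) ^ (1 - p) * A ^ p := by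
    have := sum_rpow_le_card_rpow_mul_sum_rpow (Icc (r + 1) n) hp hp1 hx
    rwa [Nat.card_Icc, Nat.add_sub_add_right, Nat.cast_sub hrn.le] at this
  have hT : ((r : ℝ) - 2) * u ^ p + (A + ((n - r : ℝ) + 2) * u) ^ p ≤ T := by
    have hf : ConcaveOn ℝ (Set.Icc u (A + ((n - r : ℝ) + 2) * u)) fun t : ℝ => t ^ p :=
      (concaveOn_rpow hp.le hp1.le).subset (fun t ht => le_trans hu ht.1) (convex_Icc _ _)
    have := hf.mul_add_le_sum (k := r - 2) (by rw [Nat.card_Icc]; omega) hy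
      (by rw [← hsum, Nat.cast_sub hr]; push_cast; ring)
    rwa [Nat.cast_sub hr, Nat.cast_ofNat] at this
  have hM := mul_rpow_add_mul_rpow_le_add_mul_rpow hp hp1 (m := (n : ℝ) - r) (j := (r : ℝ) - 1)
    (by linarith) (by linarith) hw0 hw hA hu
  have hwS : w * S ≤ w * ((n : ℝ) - r) ^ (1 - p) * A ^ p := by
    rw [mul_assoc]; exact mul_le_mul_of_nonneg_left hS hw0
  calc S + ((r : ℝ) - 1) * u ^ p = c * ((1 + w) * (S + ((r : ℝ) - 1) * u ^ p)) := by
        rw [← mul_assoc, hcw, one_mul]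
    _ ≤ c * (S + T) := mul_le_mul_of_nonneg_left (by linarith) hc0.le
end

section
/- Fix an integer n ≥ 3 and p ∈ (0,1), and define φ(x) = ((n/(n-1))^p - 1)^{1/(1-p)}·(n - x) + ((n/(n-1))^p·(x-1) - x + 2)^{1/(1-p)}·(n - x + 2)^{-p/(1-p)} for x ∈ [2, n-1]. Then φ is convex on [2, n-1]. -/
open Real Set

/-!
With `q = 1 / (1 - p) ≥ 1`, the second summand is `a ^ q * b ^ (1 - q) = b * (a / b) ^ q` for two
affine functions `a = c (x - 1) - x + 2 ≥ 0` and `b = n - x + 2 > 0` of `x`, where `c = (n / (n - 1)) ^ p`.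
This is the perspective of the convex function `t ↦ t ^ q`, which is jointly convex in `(a, b)`;
composed with an affine map it stays convex, and the first summand is affine.
-/

lemma mul_div_rpow_eq_rpow_mul_rpow_one_sub {a b : ℝ} (q : ℝ) (ha : 0 ≤ a) (hb : 0 < b) :
    b * (a / b) ^ q = a ^ q * b ^ (1 - q) := by
  rw [div_rpow ha hb.le, rpow_sub hb, rpow_one]
  field_simp

theorem convexOn_rpow_mul_rpow_one_sub {q : ℝ} (hq : 1 ≤ q) :
    ConvexOn ℝ (Ici 0 ×ˢ Ioi 0) fun z : ℝ × ℝ => z.1 ^ q * z.2 ^ (1 - q) := by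
  refine ⟨(convex_Ici 0).prod (convex_Ioi 0), ?_⟩
  rintro ⟨a₁, b₁⟩ ⟨ha₁, hb₁⟩ ⟨a₂, b₂⟩ ⟨ha₂, hb₂⟩ l m hl hm hlm
  simp only [mem_Ici, mem_Ioi] at ha₁ hb₁ ha₂ hb₂
  simp only [Prod.smul_mk, Prod.mk_add_mk, smul_eq_mul]
  set B := l * b₁ + m * b₂
  have hB : 0 < B := by
    rcases hl.eq_or_lt with rfl | hl
    · simp_all [B]
    · positivity
  -- Jensen for `t ↦ t ^ q` at the ratios `aᵢ / bᵢ`, with weights `l b₁ / B` and `m b₂ / B`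
  have h := (convexOn_rpow hq).2 (mem_Ici.2 (div_nonneg ha₁ hb₁.le))
    (mem_Ici.2 (div_nonneg ha₂ hb₂.le)) (by positivity : 0 ≤ l * b₁ / B)
    (by positivity : 0 ≤ m * b₂ / B) (by field_simp; rfl)
  have hmix : l * b₁ / B * (a₁ / b₁) + m * b₂ / B * (a₂ / b₂) = (l * a₁ + m * a₂) / B := by
    field_simp
  simp only [smul_eq_mul, hmix] at h
  rw [← mul_div_rpow_eq_rpow_mul_rpow_one_sub q (by positivity) hB,
    ← mul_div_rpow_eq_rpow_mul_rpow_one_sub q ha₁ hb₁,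
    ← mul_div_rpow_eq_rpow_mul_rpow_one_sub q ha₂ hb₂]
  calc B * ((l * a₁ + m * a₂) / B) ^ q
      ≤ B * (l * b₁ / B * (a₁ / b₁) ^ q + m * b₂ / B * (a₂ / b₂) ^ q) := by gcongr
    _ = l * (b₁ * (a₁ / b₁) ^ q) + m * (b₂ * (a₂ / b₂) ^ q) := by field_simp

theorem convexOn_rpow_mul_rpow_one_sub_affine {q : ℝ} (hq : 1 ≤ q) {s : Set ℝ} (hs : Convex ℝ s)
    {α β γ δ : ℝ} (hA : ∀ x ∈ s, 0 ≤ α * x + β) (hB : ∀ x ∈ s, 0 < γ * x + δ) :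
    ConvexOn ℝ s fun x => (α * x + β) ^ q * (γ * x + δ) ^ (1 - q) := by
  have hlin (a b x : ℝ) : AffineMap.lineMap b (a + b) x = a * x + b := by
    rw [AffineMap.lineMap_apply_module', add_sub_cancel_right, smul_eq_mul, mul_comm]
  refine (((convexOn_rpow_mul_rpow_one_sub hq).comp_affineMap
    ((AffineMap.lineMap β (α + β)).prod (AffineMap.lineMap δ (γ + δ)))).subset
      (fun x hx => ?_) hs).congr fun x _ => ?_
  · simpa [hlin] using And.intro (hA x hx) (hB x hx)
  · simp [hlin]

theorem stmt12 (n : ℕ) (hn : 3 ≤ n) (p : ℝ) (hp : 0 < p) (hp1 : p < 1) :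
    ConvexOn ℝ (Set.Icc (2 : ℝ) ((n : ℝ) - 1))
      (fun x : ℝ =>
        (((n : ℝ) / ((n : ℝ) - 1)) ^ p - 1) ^ (1 / (1 - p)) * ((n : ℝ) - x)
          + (((n : ℝ) / ((n : ℝ) - 1)) ^ p * (x - 1) - x + 2) ^ (1 / (1 - p))
            * ((n : ℝ) - x + 2) ^ (-p / (1 - p))) := by
  have hn3 : (3 : ℝ) ≤ n := by exact_mod_cast hn
  set c := ((n : ℝ) / (n - 1)) ^ p
  have hc : 1 < c := one_lt_rpow ((one_lt_div (by linarith)).2 (by linarith)) hp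
  have hq : 1 ≤ 1 / (1 - p) := by rw [le_div_iff₀ (by linarith)]; linarith
  have hexp : -p / (1 - p) = 1 - 1 / (1 - p) := by field_simp [(by linarith : 1 - p ≠ 0)]; ring
  have hlinear : ConvexOn ℝ (Icc 2 ((n : ℝ) - 1)) fun x : ℝ => (c - 1) ^ (1 / (1 - p)) * (n - x) :=
    ⟨convex_Icc _ _, fun x _ y _ a b _ _ hab => le_of_eq <| by
      simp only [smul_eq_mul]; linear_combination -((c - 1) ^ (1 / (1 - p)) * n) * hab⟩
  have hpersp := convexOn_rpow_mul_rpow_one_sub_affine hq (convex_Icc (2 : ℝ) (n - 1))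
    (α := c - 1) (β := 2 - c) (γ := -1) (δ := n + 2)
    (fun x hx => by nlinarith [hx.1]) (fun x hx => by linarith [hx.2])
  refine (hlinear.add hpersp).congr fun x _ => ?_
  simp only [Pi.add_apply, hexp]
  ring_nf
end

section
/- For every integer n ≥ 3, every real p ∈ (0,1), and every x ∈ [2, n-1], one has ((n/(n-1))^p - 1)^{1/(1-p)}·(n - x) + ((n/(n-1))^p·(x-1) - x + 2)^{1/(1-p)}·(n - x + 2)^{-p/(1-p)} ≤ 1. -/
/-!
Put `t = 1/(n-1)`, `s = 1 - t(x-1) = (n-x)/(n-1) ∈ [0,1]` and `q = 1/(1-p) ≥ 1`. Bernoulli's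
inequality gives `0 ≤ (1+t)^p - 1 ≤ pt ≤ 1`, so the first term is at most `pt(n-x) = ps`.
The base of the second term is at most `1 + pt(x-1) ≤ exp(pt(x-1))`, and `n-x+2 ≥ 3 > e`, so the
second term is at most `exp(q(pt(x-1) - p)) = exp(-pqs) ≤ 1/(1+pqs)`. Finally
`ps + 1/(1+pqs) ≤ 1` reduces to `(1-ps)(1-p+ps) = 1-p + p²s(1-s) ≥ 1-p`.
-/

open Real

lemma one_add_rpow_mul_rpow_neg_le_exp {a q r w : ℝ} (ha : -1 ≤ a) (hq : 0 ≤ q) (hr : 0 ≤ r)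
    (hw : exp 1 ≤ w) : (1 + a) ^ q * w ^ (-r) ≤ exp (a * q - r) :=
  calc (1 + a) ^ q * w ^ (-r) ≤ exp a ^ q * exp 1 ^ (-r) :=
        mul_le_mul (rpow_le_rpow (by linarith) (by linarith [add_one_le_exp a]) hq)
          (rpow_le_rpow_of_nonpos (exp_pos 1) hw (by linarith))
          (rpow_nonneg (by linarith [exp_pos 1]) _) (by positivity)
    _ = exp (a * q - r) := by rw [← exp_mul, exp_one_rpow, ← exp_add, sub_eq_add_neg]

lemma one_add_rpow_sub_one_rpow_le {t p q : ℝ} (ht : 0 ≤ t) (hp₀ : 0 ≤ p) (hp₁ : p ≤ 1)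
    (hpt : p * t ≤ 1) (hq : 1 ≤ q) : ((1 + t) ^ p - 1) ^ q ≤ p * t := by
  have hc₀ : 1 ≤ (1 + t) ^ p := one_le_rpow (by linarith) hp₀
  have hc₁ : (1 + t) ^ p ≤ 1 + p * t := rpow_one_add_le_one_add_mul_self (by linarith) hp₀ hp₁
  calc ((1 + t) ^ p - 1) ^ q ≤ (1 + t) ^ p - 1 :=
        rpow_le_self_of_le_one (by linarith) (by linarith) hq
    _ ≤ p * t := by linarith

lemma one_add_rpow_mul_sub_add_rpow_le_exp {t p y w : ℝ} (ht : 0 ≤ t) (hp₀ : 0 ≤ p) (hp₁ : p < 1)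
    (hy : 0 ≤ y) (hw : exp 1 ≤ w) :
    ((1 + t) ^ p * y - y + 1) ^ (1 / (1 - p)) * w ^ (-p / (1 - p))
      ≤ exp (-(p * (1 - t * y) / (1 - p))) := by
  have h1p : 0 < 1 - p := by linarith
  have hc₀ : 1 ≤ (1 + t) ^ p := one_le_rpow (by linarith) hp₀
  have hc₁ : (1 + t) ^ p ≤ 1 + p * t := rpow_one_add_le_one_add_mul_self (by linarith) hp₀ hp₁.le
  have hexp : ((1 + t) ^ p - 1) * y - p ≤ -(p * (1 - t * y)) := by nlinarith
  calc _ = (1 + ((1 + t) ^ p - 1) * y) ^ (1 / (1 - p)) * w ^ (-(p / (1 - p))) := by ring_nf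
    _ ≤ exp (((1 + t) ^ p - 1) * y * (1 / (1 - p)) - p / (1 - p)) :=
        one_add_rpow_mul_rpow_neg_le_exp (by nlinarith) (by positivity) (by positivity) hw
    _ ≤ exp (-(p * (1 - t * y) / (1 - p))) := by
        rw [exp_le_exp, ← neg_div, mul_one_div, div_sub_div_same]
        exact div_le_div_of_nonneg_right hexp h1p.le

lemma mul_add_exp_neg_div_one_sub_le_one {p s : ℝ} (hp : p < 1) (hs₀ : 0 ≤ s) (hs₁ : s ≤ 1) :
    p * s + exp (-(p * s / (1 - p))) ≤ 1 := by
  have h1p : 0 < 1 - p := by linarith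
  have hden : 0 < 1 - p + p * s := by
    rcases le_total 0 p with h | h <;> nlinarith
  have hexp : exp (-(p * s / (1 - p))) ≤ (1 - p) / (1 - p + p * s) := by
    calc exp (-(p * s / (1 - p))) = (exp (p * s / (1 - p)))⁻¹ := exp_neg _
      _ ≤ (p * s / (1 - p) + 1)⁻¹ := by
        gcongr
        · rw [div_add_one h1p.ne']; exact div_pos (by linarith) h1p
        · exact add_one_le_exp _
      _ = (1 - p) / (1 - p + p * s) := by rw [div_add_one h1p.ne', inv_div, add_comm (p * s)]
  have hrat : (1 - p) / (1 - p + p * s) ≤ 1 - p * s := by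
    rw [div_le_iff₀ hden]
    nlinarith [mul_nonneg (mul_self_nonneg p) (mul_nonneg hs₀ (sub_nonneg.2 hs₁))]
  linarith

theorem stmt13 (n : ℕ) (hn : 3 ≤ n) (p : ℝ) (hp : 0 < p) (hp1 : p < 1)
    (x : ℝ) (hx : x ∈ Set.Icc (2 : ℝ) ((n : ℝ) - 1)) :
    (((n : ℝ) / ((n : ℝ) - 1)) ^ p - 1) ^ (1 / (1 - p)) * ((n : ℝ) - x)
      + (((n : ℝ) / ((n : ℝ) - 1)) ^ p * (x - 1) - x + 2) ^ (1 / (1 - p))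
        * ((n : ℝ) - x + 2) ^ (-p / (1 - p)) ≤ 1 := by
  obtain ⟨hx₂, hxn⟩ := hx
  have hn₃ : (3 : ℝ) ≤ n := by exact_mod_cast hn
  have hm : (0 : ℝ) < n - 1 := by linarith
  have hbase : (n : ℝ) / (n - 1) = 1 + 1 / (n - 1) := by field_simp; ring
  set t : ℝ := 1 / ((n : ℝ) - 1)
  have ht₀ : 0 ≤ t := by positivity
  have htm : t * (n - 1) = 1 := one_div_mul_cancel hm.ne'
  have hfirst : ((1 + t) ^ p - 1) ^ (1 / (1 - p)) * (n - x) ≤ p * (1 - t * (x - 1)) :=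
    calc _ ≤ p * t * (n - x) :=
          mul_le_mul_of_nonneg_right (one_add_rpow_sub_one_rpow_le ht₀ hp.le hp1.le
            (by nlinarith) (by rw [le_div_iff₀ (by linarith)]; linarith)) (by linarith)
      _ = p * (1 - t * (x - 1)) := by linear_combination p * htm
  have hsecond : ((1 + t) ^ p * (x - 1) - x + 2) ^ (1 / (1 - p)) * (n - x + 2) ^ (-p / (1 - p))
      ≤ exp (-(p * (1 - t * (x - 1)) / (1 - p))) := by
    convert one_add_rpow_mul_sub_add_rpow_le_exp ht₀ hp.le hp1 (by linarith : 0 ≤ x - 1)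
      (by linarith [exp_one_lt_d9] : exp 1 ≤ (n : ℝ) - x + 2) using 3
    ring
  rw [hbase]
  linarith [mul_add_exp_neg_div_one_sub_le_one (s := 1 - t * (x - 1)) hp1 (by nlinarith)
    (by nlinarith)]
end

section
/- Let n ≥ 3 be an integer, p > 0, and let x_1 ≤ x_2 ≤ ... ≤ x_n be nonnegative reals with mean m = (1/n)·Σ x_i, and let r ∈ {1,...,n} be such that x_i < m for i < r and x_i ≥ m for i ≥ r. Then Σ_{r ≤ j < i ≤ n} (x_i - x_j)^p + (r-1)·Σ_{i=r}^n (x_i - m)^p ≤ (1 - 1/n)^p · Σ_{1 ≤ j < i ≤ n} (x_i - x_j)^p. -/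
open Finset Real

/-!
Let `A = [r, n]`, `B = [1, r)`, `c = (1 - 1/n)^p ≤ 1` and `T = Σ_A (x_i - m) = Σ_B (m - x_j)`.
A pair inside `A` contributes at most `(x_i - m)^p`, so it suffices to bound
`(n - 1) Σ_A (x_i - m)^p` by `c` times the pairs across `A × B` and inside `B` plus
`(n - r) Σ_A (x_i - m)^p`.
For `p ≥ 1` this holds row by row, by Jensen over `B` and Bernoulli's inequality.
For `p ≤ 1` and `|A| ≥ 2`, concavity of `t ↦ t^p` bounds the row of `i` below by
`(|B| - 1)(x_i - m)^p + (x_i - m + T)^p`, and the sum of the latter by `(|A| - 1 + 2^p) T^p`,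
while the power mean gives `Σ_A (x_i - m)^p ≤ |A| (T / |A|)^p`; the remaining numerical
inequality follows from `z^p ≥ 1 + p log z`. For `p ≤ 1` and `A = {n}`, use
`x_n - m ≤ (1 - 1/n)(x_n - x_1)` and subadditivity of `t ↦ t^p` along `x_1 ≤ x_j ≤ x_n`.
-/

namespace ConcaveOn

variable {s : Set ℝ} {f : ℝ → ℝ}

theorem map_add_add_add_map_le (hf : ConcaveOn ℝ s f) {w a b : ℝ} (hw : w ∈ s)
    (hwab : w + a + b ∈ s) (ha : 0 ≤ a) (hb : 0 ≤ b) :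
    f (w + a + b) + f w ≤ f (w + a) + f (w + b) := by
  rcases (add_nonneg ha hb).eq_or_lt with hab | hab
  · obtain ⟨rfl, rfl⟩ : a = 0 ∧ b = 0 := ⟨by linarith, by linarith⟩
    simp
  have key := fun (α β : ℝ) (hα : 0 ≤ α) (hβ : 0 ≤ β) (hαβ : α + β = a + b) =>
    hf.2 hw hwab (div_nonneg hα hab.le) (div_nonneg hβ hab.le)
      (by rw [← add_div, hαβ, div_self hab.ne'])
  have h₁ := key b a hb ha (add_comm b a)
  have h₂ := key a b ha hb rfl
  simp only [smul_eq_mul] at h₁ h₂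
  have e₁ : b / (a + b) * w + a / (a + b) * (w + a + b) = w + a := by field_simp; ring
  have e₂ : a / (a + b) * w + b / (a + b) * (w + a + b) = w + b := by field_simp; ring
  rw [e₁] at h₁
  rw [e₂] at h₂
  have e₃ : b / (a + b) * f w + a / (a + b) * f (w + a + b) +
      (a / (a + b) * f w + b / (a + b) * f (w + a + b)) = f w + f (w + a + b) := by
    field_simp; ring
  linarith

theorem card_sub_one_mul_add_map_add_sum_le {ι : Type*} (hf : ConcaveOn ℝ s f) (S : Finset ι)
    {v : ι → ℝ} {w : ℝ} (hw : w ∈ s) (hws : w + ∑ j ∈ S, v j ∈ s) (hv : ∀ j ∈ S, 0 ≤ v j) :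
    ((#S : ℝ) - 1) * f w + f (w + ∑ j ∈ S, v j) ≤ ∑ j ∈ S, f (w + v j) := by
  induction S using Finset.cons_induction with
  | empty => simp
  | cons a S ha ih =>
    rw [sum_cons] at hws ⊢
    have hva := hv a (mem_cons_self a S)
    have hvS : ∀ j ∈ S, 0 ≤ v j := fun j hj => hv j (mem_cons_of_mem hj)
    have hS : w + ∑ j ∈ S, v j ∈ s := hf.1.ordConnected.out hw hws
      ⟨by linarith [sum_nonneg hvS], by linarith⟩
    have := hf.map_add_add_add_map_le hw (by rwa [← add_assoc] at hws) hva (sum_nonneg hvS)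
    rw [card_cons, sum_cons, Nat.cast_succ, ← add_assoc]
    linarith [ih hS hvS]

end ConcaveOn

namespace Real

theorem sum_rpow_le_card_mul_rpow_div {ι : Type*} (A : Finset ι) {u : ι → ℝ} {p : ℝ}
    (hp₀ : 0 ≤ p) (hp₁ : p ≤ 1) (hu : ∀ i ∈ A, 0 ≤ u i) :
    ∑ i ∈ A, u i ^ p ≤ #A * ((∑ i ∈ A, u i) / #A) ^ p := by
  rcases A.eq_empty_or_nonempty with rfl | hA
  · simp
  have hk : (0 : ℝ) < #A := by exact_mod_cast hA.card_pos
  have hJ := (concaveOn_rpow hp₀ hp₁).le_map_sum (t := A) (w := fun _ => (#A : ℝ)⁻¹) (p := u)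
    (fun _ _ => by positivity) (by simp [hk.ne']) hu
  simp only [smul_eq_mul, ← mul_sum] at hJ
  rw [inv_mul_eq_div, inv_mul_eq_div, div_le_iff₀ hk] at hJ
  linarith

theorem sub_one_le_rpow_mul_of_one_le {N s p : ℝ} (hs : 0 < s) (hsN : s + 1 ≤ N)
    (hp : 1 ≤ p) :
    N - 1 ≤ (1 - 1 / N) ^ p * (N - s - 1 + s * (1 + 1 / s) ^ p) := by
  have hN : 0 < N := by linarith
  have hθ : 0 < 1 - 1 / N := by rw [sub_pos, div_lt_one hN]; linarith
  have bernoulli := fun t (ht : 0 < t) =>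
    one_add_mul_self_le_rpow_one_add (s := t - 1) (by linarith) hp
  have h₁ := bernoulli (1 - 1 / N) hθ
  have h₂ := bernoulli ((1 - 1 / N) * (1 + 1 / s)) (by positivity)
  simp only [add_sub_cancel] at h₁ h₂
  rw [mul_rpow hθ.le (by positivity)] at h₂
  -- Bernoulli's tangent lines at `1` cancel because `(N - s - 1) θ + s θ (1 + 1/s) = N - 1`.
  have hcancel : (N - s - 1) * (1 - 1 / N - 1) + s * ((1 - 1 / N) * (1 + 1 / s) - 1) = 0 := by
    field_simp
    ring
  nlinarith [mul_le_mul_of_nonneg_left h₁ (by linarith : 0 ≤ N - s - 1),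
    mul_le_mul_of_nonneg_left h₂ hs.le]

theorem one_add_mul_log_le_rpow {z : ℝ} (hz : 0 < z) (p : ℝ) : 1 + p * log z ≤ z ^ p := by
  rw [rpow_def_of_pos hz, mul_comm p]
  linarith [add_one_le_exp (log z * p)]

theorem le_natCast_mul_log_add_log_two {k : ℕ} (hk : 2 ≤ k) : (k : ℝ) ≤ k * log k + log 2 := by
  rcases hk.eq_or_lt with rfl | hk
  · norm_num
    linarith [log_two_gt_d9]
  · have h3 : (3 : ℝ) ≤ k := by exact_mod_cast hk
    have hlog : 1 ≤ log k := by
      rw [le_log_iff_exp_le (by linarith)]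
      linarith [exp_one_lt_d9]
    nlinarith [log_nonneg (one_le_two : (1 : ℝ) ≤ 2)]

theorem sub_one_sub_rpow_mul_le_of_nonneg {N p : ℝ} {k : ℕ} (hk : 2 ≤ k) (hkN : k + 1 ≤ N)
    (hp : 0 ≤ p) :
    (N - 1 - (1 - 1 / N) ^ p * (N - 2)) * k ≤ (1 - 1 / N) ^ p * ((k - 1 + 2 ^ p) * k ^ p) := by
  have hk2 : (2 : ℝ) ≤ k := by exact_mod_cast hk
  have hN : 0 < N := by linarith
  set θ := 1 - 1 / N with hθ_def
  have hθ : 0 < θ := by rw [hθ_def, sub_pos, div_lt_one hN]; linarith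
  have hk0 : (0 : ℝ) < k := by linarith
  have hθk : (θ * k) ^ p = θ ^ p * k ^ p := mul_rpow hθ.le hk0.le
  have h2θk : (2 * (θ * k)) ^ p = 2 ^ p * (θ ^ p * k ^ p) := by
    rw [mul_rpow zero_le_two (by positivity), hθk]
  have t₁ := one_add_mul_log_le_rpow hθ p
  have t₂ := one_add_mul_log_le_rpow (mul_pos hθ hk0) p
  have t₃ := one_add_mul_log_le_rpow (mul_pos two_pos (mul_pos hθ hk0)) p
  rw [log_mul hθ.ne' hk0.ne', hθk] at t₂
  rw [log_mul two_ne_zero (by positivity), log_mul hθ.ne' hk0.ne', h2θk] at t₃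
  have hlogθ : -1 ≤ (N - 1) * log θ := by
    have h := log_le_sub_one_of_pos (inv_pos.2 hθ)
    have hinv : θ⁻¹ - 1 = 1 / (N - 1) := by
      have : N - 1 ≠ 0 := by linarith
      rw [hθ_def]; field_simp; ring
    rw [log_inv, hinv, le_div_iff₀ (by linarith)] at h
    linarith
  have hkey : 0 ≤ p * ((N - 1) * k * log θ + (k * log k + log 2)) :=
    mul_nonneg hp (by nlinarith [le_natCast_mul_log_add_log_two hk])
  nlinarith [mul_le_mul_of_nonneg_left t₁ (by nlinarith : (0 : ℝ) ≤ (N - 2) * k),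
    mul_le_mul_of_nonneg_left t₂ (by linarith : (0 : ℝ) ≤ k - 1)]

end Real

section CrossSum

variable {ι : Type*} {A B : Finset ι} {x : ι → ℝ} {m p : ℝ}

theorem sum_sub_eq_card_mul_add_sum (B : Finset ι) (x : ι → ℝ) (y m : ℝ) :
    ∑ j ∈ B, (y - x j) = #B * (y - m) + ∑ j ∈ B, (m - x j) := by
  rw [← nsmul_eq_mul, ← sum_const, ← sum_add_distrib]
  exact sum_congr rfl fun _ _ => by ring

theorem card_mul_rpow_le_sum_rpow_sub_of_one_le (hp : 1 ≤ p) (hB : B.Nonempty)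
    (hxB : ∀ j ∈ B, x j ≤ m) {y : ℝ} (hy : m ≤ y) (hyB : y - m ≤ ∑ j ∈ B, (m - x j)) :
    #B * ((1 + 1 / #B) * (y - m)) ^ p ≤ ∑ j ∈ B, (y - x j) ^ p := by
  have hs : (0 : ℝ) < #B := by exact_mod_cast hB.card_pos
  have hJ := rpow_arith_mean_le_arith_mean_rpow B (fun _ => 1 / (#B : ℝ)) (fun j => y - x j)
    (fun _ _ => by positivity) (by simp [hs.ne']) (fun j hj => by linarith [hxB j hj]) hp
  simp only [← mul_sum] at hJ
  have hmean : (1 + 1 / #B) * (y - m) ≤ 1 / #B * ∑ j ∈ B, (y - x j) := by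
    rw [sum_sub_eq_card_mul_add_sum B x y m, mul_add, ← mul_assoc, one_div_mul_cancel hs.ne',
      add_mul, one_mul, one_div_mul_eq_div, one_div_mul_eq_div]
    gcongr
  have := mul_le_mul_of_nonneg_left
    ((rpow_le_rpow (mul_nonneg (by positivity) (sub_nonneg.2 hy)) hmean (by linarith)).trans hJ)
    hs.le
  rwa [← mul_assoc, mul_one_div_cancel hs.ne', one_mul] at this

theorem sub_one_mul_sum_rpow_sub_le_of_one_le (hp : 1 ≤ p) (hB : B.Nonempty)
    (hxA : ∀ i ∈ A, m ≤ x i) (hxB : ∀ j ∈ B, x j ≤ m)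
    (hbal : ∑ i ∈ A, (x i - m) = ∑ j ∈ B, (m - x j)) :
    ((#A + #B : ℝ) - 1) * ∑ i ∈ A, (x i - m) ^ p ≤ (1 - 1 / (#A + #B : ℝ)) ^ p *
      ((#A - 1 : ℝ) * ∑ i ∈ A, (x i - m) ^ p + ∑ i ∈ A, ∑ j ∈ B, (x i - x j) ^ p) := by
  rw [mul_sum, mul_sum, ← sum_add_distrib, mul_sum]
  refine sum_le_sum fun i hi => ?_
  have hs : (0 : ℝ) < #B := by exact_mod_cast hB.card_pos
  have hA : (1 : ℝ) ≤ #A := by exact_mod_cast card_pos.2 ⟨i, hi⟩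
  have hu : 0 ≤ x i - m := sub_nonneg.2 (hxA i hi)
  have hcross := card_mul_rpow_le_sum_rpow_sub_of_one_le hp hB hxB (hxA i hi)
    (hbal ▸ single_le_sum (fun i hi => sub_nonneg.2 (hxA i hi)) hi)
  have hscalar := sub_one_le_rpow_mul_of_one_le hs (by linarith : (#B : ℝ) + 1 ≤ #A + #B) hp
  rw [mul_rpow (by positivity) hu] at hcross
  have hc : 0 ≤ (1 - 1 / (#A + #B : ℝ)) ^ p := rpow_nonneg (by
    rw [sub_nonneg, div_le_one (by positivity)]; linarith) p
  nlinarith [mul_le_mul_of_nonneg_right hscalar (rpow_nonneg hu p),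
    mul_le_mul_of_nonneg_left hcross hc]

theorem sub_one_mul_sum_rpow_sub_le_of_le_one (hp₀ : 0 ≤ p) (hp₁ : p ≤ 1) (hA : 2 ≤ #A)
    (hB : B.Nonempty)     (hxA : ∀ i ∈ A, m ≤ x i) (hxB : ∀ j ∈ B, x j ≤ m)
    (hbal : ∑ i ∈ A, (x i - m) = ∑ j ∈ B, (m - x j)) :
    ((#A + #B : ℝ) - 1) * ∑ i ∈ A, (x i - m) ^ p ≤ (1 - 1 / (#A + #B : ℝ)) ^ p *
      ((#A - 1 : ℝ) * ∑ i ∈ A, (x i - m) ^ p + ∑ i ∈ A, ∑ j ∈ B, (x i - x j) ^ p) := by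
  set T := ∑ j ∈ B, (m - x j)
  set S := ∑ i ∈ A, (x i - m) ^ p
  set c := (1 - 1 / (#A + #B : ℝ)) ^ p
  have hf := concaveOn_rpow hp₀ hp₁
  have hu : ∀ i ∈ A, 0 ≤ x i - m := fun i hi => sub_nonneg.2 (hxA i hi)
  have hv : ∀ j ∈ B, 0 ≤ m - x j := fun j hj => sub_nonneg.2 (hxB j hj)
  have hT : 0 ≤ T := sum_nonneg hv
  have hk : (2 : ℝ) ≤ #A := by exact_mod_cast hA
  have hs : (1 : ℝ) ≤ #B := by exact_mod_cast hB.card_pos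
  have hrow : ∀ i ∈ A, (#B - 1 : ℝ) * (x i - m) ^ p + (T + (x i - m)) ^ p ≤
      ∑ j ∈ B, (x i - x j) ^ p := by
    intro i hi
    have := hf.card_sub_one_mul_add_map_add_sum_le B (hu i hi)
      (Set.mem_Ici.2 (add_nonneg (hu i hi) hT)) hv
    simpa only [sub_add_sub_cancel, add_comm T] using this
  have hcol : (#A - 1 : ℝ) * T ^ p + (2 * T) ^ p ≤ ∑ i ∈ A, (T + (x i - m)) ^ p := by
    have := hf.card_sub_one_mul_add_map_add_sum_le A hT
      (Set.mem_Ici.2 (add_nonneg hT (sum_nonneg hu))) hu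
    rwa [hbal, ← two_mul] at this
  have hmean : S ≤ #A * (T / #A) ^ p := hbal ▸ sum_rpow_le_card_mul_rpow_div A hp₀ hp₁ hu
  have hc : 0 ≤ c := rpow_nonneg (by rw [sub_nonneg, div_le_one (by positivity)]; linarith) p
  have hc₁ : c ≤ 1 := rpow_le_one (by rw [sub_nonneg, div_le_one (by positivity)]; linarith)
    (by linarith [one_div_nonneg.2 (by positivity : (0 : ℝ) ≤ #A + #B)]) hp₀
  have hscalar := sub_one_sub_rpow_mul_le_of_nonneg hA (by linarith : (#A : ℝ) + 1 ≤ #A + #B) hp₀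
  set γ := (#A + #B : ℝ) - 1 - c * (#A + #B - 2)
  have hγ : 0 ≤ γ := by nlinarith
  have hS : γ * S ≤ c * ((#A - 1 + 2 ^ p) * T ^ p) :=
    calc γ * S ≤ γ * (#A * (T / #A) ^ p) := mul_le_mul_of_nonneg_left hmean hγ
      _ = (γ * #A) * (T ^ p / (#A : ℝ) ^ p) := by rw [div_rpow hT (by positivity)]; ring
      _ ≤ (c * ((#A - 1 + 2 ^ p) * (#A : ℝ) ^ p)) * (T ^ p / (#A : ℝ) ^ p) :=
          mul_le_mul_of_nonneg_right hscalar (by positivity)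
      _ = c * ((#A - 1 + 2 ^ p) * T ^ p) := by
          have : (#A : ℝ) ^ p ≠ 0 := (rpow_pos_of_pos (by positivity) p).ne'
          field_simp
  have hX := sum_le_sum hrow
  rw [sum_add_distrib, ← mul_sum] at hX
  rw [mul_rpow zero_le_two hT] at hcol
  nlinarith [mul_le_mul_of_nonneg_left hX hc, mul_le_mul_of_nonneg_left hcol hc]

end CrossSum

namespace Finset

theorem sum_Ico_add_sum_Icc {M : Type*} [AddCommMonoid M] (f : ℕ → M) {a r n : ℕ}
    (har : a ≤ r) (hrn : r ≤ n + 1) :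
    ∑ i ∈ Ico a r, f i + ∑ i ∈ Icc r n, f i = ∑ i ∈ Icc a n, f i := by
  rw [← Ico_add_one_right_eq_Icc, ← Ico_add_one_right_eq_Icc]
  exact sum_Ico_consecutive f har hrn

theorem sum_Icc_sum_Ico_eq_add_add {M : Type*} [AddCommMonoid M] (f : ℕ → ℕ → M) {a r n : ℕ}
    (har : a ≤ r) (hrn : r ≤ n) :
    ∑ i ∈ Icc a n, ∑ j ∈ Ico a i, f i j = ∑ i ∈ Ico a r, ∑ j ∈ Ico a i, f i j +
      (∑ i ∈ Icc r n, ∑ j ∈ Ico a r, f i j + ∑ i ∈ Icc r n, ∑ j ∈ Ico r i, f i j) := by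
  rw [← sum_Ico_add_sum_Icc _ har (by omega), ← sum_add_distrib]
  congr 1
  exact sum_congr rfl fun i hi => (sum_Ico_consecutive _ har (mem_Icc.1 hi).1).symm

end Finset

theorem one_sub_one_div_natCast_nonneg (n : ℕ) : 0 ≤ 1 - 1 / (n : ℝ) := by
  rcases Nat.eq_zero_or_pos n with rfl | hn
  · simp
  rw [sub_nonneg, div_le_one (by exact_mod_cast hn)]
  exact_mod_cast hn

section Sorted

variable {n r : ℕ} {p m : ℝ} {x : ℕ → ℝ}

theorem sum_Icc_sum_Ico_rpow_sub_le (hp : 0 ≤ p) (hmono : MonotoneOn x (Set.Icc r n))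
    (hxA : ∀ i ∈ Icc r n, m ≤ x i) :
    ∑ i ∈ Icc r n, ∑ j ∈ Ico r i, (x i - x j) ^ p ≤
      ((n : ℝ) - r) * ∑ i ∈ Icc r n, (x i - m) ^ p := by
  rw [mul_sum]
  refine sum_le_sum fun i hi => ?_
  obtain ⟨hri, hin⟩ := mem_Icc.1 hi
  calc ∑ j ∈ Ico r i, (x i - x j) ^ p ≤ ∑ _j ∈ Ico r i, (x i - m) ^ p := by
        refine sum_le_sum fun j hj => ?_
        obtain ⟨hrj, hji⟩ := mem_Ico.1 hj
        have hj' : j ∈ Icc r n := mem_Icc.2 ⟨hrj, by omega⟩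
        exact rpow_le_rpow (sub_nonneg.2 (hmono ⟨hrj, by omega⟩ ⟨hri, hin⟩ hji.le))
          (by linarith [hxA j hj']) hp
    _ = ((i - r : ℕ) : ℝ) * (x i - m) ^ p := by rw [sum_const, Nat.card_Ico, nsmul_eq_mul]
    _ ≤ ((n : ℝ) - r) * (x i - m) ^ p := by
        refine mul_le_mul_of_nonneg_right ?_ (rpow_nonneg (by linarith [hxA i hi]) p)
        rw [Nat.cast_sub hri]
        gcongr

theorem sub_mean_le_mul_sub (hn : 1 ≤ n) (hmono : MonotoneOn x (Set.Icc 1 n))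
    (hm : m = (∑ i ∈ Icc 1 n, x i) / n) :
    x n - m ≤ (1 - 1 / (n : ℝ)) * (x n - x 1) := by
  have hn0 : (0 : ℝ) < n := by exact_mod_cast hn
  have hlow : ∀ j ∈ Ico 1 n, x 1 ≤ x j := fun j hj =>
    hmono ⟨le_rfl, hn⟩ ⟨(mem_Ico.1 hj).1, (mem_Ico.1 hj).2.le⟩ (mem_Ico.1 hj).1
  have hsum := card_nsmul_le_sum _ _ _ hlow
  rw [nsmul_eq_mul, Nat.card_Ico, Nat.cast_sub hn, Nat.cast_one] at hsum
  have hsplit := sum_Ico_add_sum_Icc x hn (Nat.le_succ n)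
  rw [Icc_self, sum_singleton] at hsplit
  have key : (n : ℝ) * (x n - m) ≤ (n - 1) * (x n - x 1) := by
    rw [hm, mul_sub, mul_div_cancel₀ _ hn0.ne']
    linarith
  calc x n - m = (n * (x n - m)) / n := by field_simp
    _ ≤ ((n - 1) * (x n - x 1)) / n := by gcongr
    _ = (1 - 1 / (n : ℝ)) * (x n - x 1) := by field_simp

theorem sum_rpow_sub_first_le (hp : 0 < p) (hmono : MonotoneOn x (Set.Icc 1 n)) :
    ∑ i ∈ Ico 1 n, (x i - x 1) ^ p ≤ ∑ i ∈ Ico 1 n, ∑ j ∈ Ico 1 i, (x i - x j) ^ p := by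
  refine sum_le_sum fun i hi => ?_
  obtain ⟨h1i, hin⟩ := mem_Ico.1 hi
  rcases h1i.eq_or_lt with rfl | h1i
  · simp [zero_rpow hp.ne']
  refine single_le_sum (f := fun j => (x i - x j) ^ p) (fun j hj => ?_) (mem_Ico.2 ⟨le_rfl, h1i⟩)
  obtain ⟨h1j, hji⟩ := mem_Ico.1 hj
  exact rpow_nonneg (sub_nonneg.2 (hmono ⟨h1j, by omega⟩ ⟨by omega, hin.le⟩ hji.le)) p

theorem sub_one_mul_rpow_sub_mean_le_of_le_one (hn : 1 ≤ n) (hp₀ : 0 < p) (hp₁ : p ≤ 1)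
    (hmono : MonotoneOn x (Set.Icc 1 n)) (hm : m = (∑ i ∈ Icc 1 n, x i) / n) (hxn : m ≤ x n) :
    ((n : ℝ) - 1) * (x n - m) ^ p ≤ (1 - 1 / (n : ℝ)) ^ p *
      (∑ j ∈ Ico 1 n, (x n - x j) ^ p + ∑ i ∈ Ico 1 n, ∑ j ∈ Ico 1 i, (x i - x j) ^ p) := by
  have hθ := one_sub_one_div_natCast_nonneg n
  have hx1n : x 1 ≤ x n := hmono ⟨le_rfl, hn⟩ ⟨hn, le_rfl⟩ hn
  have hpow : (x n - m) ^ p ≤ (1 - 1 / (n : ℝ)) ^ p * (x n - x 1) ^ p := by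
    rw [← mul_rpow hθ (sub_nonneg.2 hx1n)]
    exact rpow_le_rpow (sub_nonneg.2 hxn) (sub_mean_le_mul_sub hn hmono hm) hp₀.le
  have hsub : ((n : ℝ) - 1) * (x n - x 1) ^ p ≤
      ∑ j ∈ Ico 1 n, (x n - x j) ^ p + ∑ j ∈ Ico 1 n, (x j - x 1) ^ p := by
    rw [← sum_add_distrib]
    calc ((n : ℝ) - 1) * (x n - x 1) ^ p = ∑ _j ∈ Ico 1 n, (x n - x 1) ^ p := by
          rw [sum_const, Nat.card_Ico, nsmul_eq_mul, Nat.cast_sub hn, Nat.cast_one]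
      _ ≤ _ := sum_le_sum fun j hj => by
          obtain ⟨h1j, hjn⟩ := mem_Ico.1 hj
          have := rpow_add_le_add_rpow (sub_nonneg.2 (hmono ⟨h1j, hjn.le⟩ ⟨hn, le_rfl⟩ hjn.le))
            (sub_nonneg.2 (hmono ⟨le_rfl, hn⟩ ⟨h1j, hjn.le⟩ h1j)) hp₀.le hp₁
          rwa [sub_add_sub_cancel] at this
  have hc : 0 ≤ (1 - 1 / (n : ℝ)) ^ p := rpow_nonneg hθ p
  calc ((n : ℝ) - 1) * (x n - m) ^ p
      ≤ ((n : ℝ) - 1) * ((1 - 1 / (n : ℝ)) ^ p * (x n - x 1) ^ p) :=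
        mul_le_mul_of_nonneg_left hpow (by linarith [(Nat.one_le_cast (α := ℝ)).2 hn])
    _ = (1 - 1 / (n : ℝ)) ^ p * (((n : ℝ) - 1) * (x n - x 1) ^ p) := by ring
    _ ≤ _ := mul_le_mul_of_nonneg_left
        (hsub.trans (add_le_add_right (sum_rpow_sub_first_le hp₀ hmono) _)) hc

theorem sum_sub_mean_eq (hr1 : 1 ≤ r) (hrn : r ≤ n) (hm : m = (∑ i ∈ Icc 1 n, x i) / n) :
    ∑ i ∈ Icc r n, (x i - m) = ∑ j ∈ Ico 1 r, (m - x j) := by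
  have hsplit := sum_Ico_add_sum_Icc (fun i => x i - m) hr1 (by omega : r ≤ n + 1)
  have hzero : ∑ i ∈ Icc 1 n, (x i - m) = 0 := by
    rcases Nat.eq_zero_or_pos n with rfl | hn
    · simp
    rw [sum_sub_distrib, sum_const, Nat.card_Icc, nsmul_eq_mul, hm, Nat.add_sub_cancel,
      mul_div_cancel₀ _ (by positivity), sub_self]
  rw [hzero, ← neg_eq_iff_add_eq_zero, ← sum_neg_distrib] at hsplit
  rw [← hsplit]
  exact sum_congr rfl fun _ _ => by ring

theorem sub_one_mul_sum_rpow_sub_mean_le (hr1 : 1 ≤ r) (hrn : r ≤ n) (hp : 0 < p)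
    (hmono : MonotoneOn x (Set.Icc 1 n)) (hm : m = (∑ i ∈ Icc 1 n, x i) / n)
    (hxA : ∀ i ∈ Icc r n, m ≤ x i) (hxB : ∀ j ∈ Ico 1 r, x j ≤ m) :
    ((n : ℝ) - 1) * ∑ i ∈ Icc r n, (x i - m) ^ p ≤ (1 - 1 / (n : ℝ)) ^ p *
      (((n : ℝ) - r) * ∑ i ∈ Icc r n, (x i - m) ^ p +
        ∑ i ∈ Icc r n, ∑ j ∈ Ico 1 r, (x i - x j) ^ p +
        ∑ i ∈ Ico 1 r, ∑ j ∈ Ico 1 i, (x i - x j) ^ p) := by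
  have hbal := sum_sub_mean_eq hr1 hrn hm
  rcases hr1.eq_or_lt with rfl | hr2
  · have hA : ∀ i ∈ Icc 1 n, x i - m = 0 := by
      rw [Ico_self, sum_empty] at hbal
      exact (sum_eq_zero_iff_of_nonneg fun i hi => sub_nonneg.2 (hxA i hi)).1 hbal
    have hS : ∑ i ∈ Icc 1 n, (x i - m) ^ p = 0 :=
      sum_eq_zero fun i hi => by rw [hA i hi, zero_rpow hp.ne']
    simp [hS]
  have hB : (Ico 1 r).Nonempty := nonempty_Ico.2 hr2
  have hN : (#(Icc r n) : ℝ) + #(Ico 1 r) = n := by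
    rw [Nat.card_Icc, Nat.card_Ico]; norm_cast; omega
  have hA₁ : (#(Icc r n) : ℝ) - 1 = n - r := by
    rw [Nat.card_Icc, Nat.cast_sub (by omega)]; push_cast; ring
  have hc : 0 ≤ (1 - 1 / (n : ℝ)) ^ p := rpow_nonneg (one_sub_one_div_natCast_nonneg n) p
  have hWb : 0 ≤ ∑ i ∈ Ico 1 r, ∑ j ∈ Ico 1 i, (x i - x j) ^ p :=
    sum_nonneg fun i hi => sum_nonneg fun j hj => by
      obtain ⟨h1i, hir⟩ := mem_Ico.1 hi
      obtain ⟨h1j, hji⟩ := mem_Ico.1 hj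
      exact rpow_nonneg (sub_nonneg.2 (hmono ⟨h1j, by omega⟩ ⟨h1i, by omega⟩ hji.le)) p
  rcases le_or_gt 1 p with hp1 | hp1
  · have := sub_one_mul_sum_rpow_sub_le_of_one_le hp1 hB hxA hxB hbal
    rw [hN, hA₁] at this
    nlinarith [mul_nonneg hc hWb]
  rcases hrn.lt_or_eq with hrn | rfl
  · have hA : 2 ≤ #(Icc r n) := by rw [Nat.card_Icc]; omega
    have := sub_one_mul_sum_rpow_sub_le_of_le_one hp.le hp1.le hA hB hxA hxB hbal
    rw [hN, hA₁] at this
    nlinarith [mul_nonneg hc hWb]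
  · have := sub_one_mul_rpow_sub_mean_le_of_le_one (by omega) hp hp1.le hmono hm (hxA r (by simp))
    simpa [Icc_self] using this

end Sorted

theorem stmt15_general (n r : ℕ) (hr1 : 1 ≤ r) (hrn : r ≤ n)
    (p : ℝ) (hp : 0 < p) (x : ℕ → ℝ)
    (hmono : ∀ i j, 1 ≤ i → i ≤ j → j ≤ n → x i ≤ x j)
    (m : ℝ) (hm : m = (∑ i ∈ Icc 1 n, x i) / n)
    (hlt : ∀ i ∈ Icc 1 n, i < r → x i < m)
    (hge : ∀ i ∈ Icc 1 n, r ≤ i → m ≤ x i) :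
    ∑ i ∈ Icc r n, ∑ j ∈ Ico r i, (x i - x j) ^ p
        + ((r : ℝ) - 1) * ∑ i ∈ Icc r n, (x i - m) ^ p
      ≤ (1 - 1 / (n : ℝ)) ^ p
        * ∑ i ∈ Icc 1 n, ∑ j ∈ Ico 1 i, (x i - x j) ^ p := by
  have hmono' : MonotoneOn x (Set.Icc 1 n) := fun i hi j hj hij => hmono i j hi.1 hij hj.2
  have hxA : ∀ i ∈ Icc r n, m ≤ x i := fun i hi =>
    hge i (mem_Icc.2 ⟨hr1.trans (mem_Icc.1 hi).1, (mem_Icc.1 hi).2⟩) (mem_Icc.1 hi).1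
  have hxB : ∀ j ∈ Ico 1 r, x j ≤ m := fun j hj => by
    obtain ⟨h1j, hjr⟩ := mem_Ico.1 hj
    exact (hlt j (mem_Icc.2 ⟨h1j, by omega⟩) hjr).le
  have hWa := sum_Icc_sum_Ico_rpow_sub_le hp.le (hmono'.mono (Set.Icc_subset_Icc_left hr1)) hxA
  have hcross := sub_one_mul_sum_rpow_sub_mean_le hr1 hrn hp hmono' hm hxA hxB
  have hc₁ : (1 - 1 / (n : ℝ)) ^ p ≤ 1 :=
    rpow_le_one (one_sub_one_div_natCast_nonneg n)
      (by linarith [one_div_nonneg.2 (Nat.cast_nonneg (α := ℝ) n)]) hp.le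
  rw [sum_Icc_sum_Ico_eq_add_add _ hr1 hrn]
  nlinarith [mul_le_mul_of_nonneg_left hWa (sub_nonneg.2 hc₁)]

theorem stmt15 (n r : ℕ) (hn : 3 ≤ n) (hr1 : 1 ≤ r) (hrn : r ≤ n)
    (p : ℝ) (hp : 0 < p) (x : ℕ → ℝ)
    (hx0 : ∀ i ∈ Icc 1 n, 0 ≤ x i)
    (hmono : ∀ i j, 1 ≤ i → i ≤ j → j ≤ n → x i ≤ x j)
    (m : ℝ) (hm : m = (∑ i ∈ Icc 1 n, x i) / n)
    (hlt : ∀ i ∈ Icc 1 n, i < r → x i < m)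
    (hge : ∀ i ∈ Icc 1 n, r ≤ i → m ≤ x i) :
    ∑ i ∈ Icc r n, ∑ j ∈ Ico r i, (x i - x j) ^ p
        + ((r : ℝ) - 1) * ∑ i ∈ Icc r n, (x i - m) ^ p
      ≤ (1 - 1 / (n : ℝ)) ^ p
        * ∑ i ∈ Icc 1 n, ∑ j ∈ Ico 1 i, (x i - x j) ^ p :=
  stmt15_general n r hr1 hrn p hp x hmono m hm hlt hge
end

section
/- Let n ≥ 3, let f be the function on the vertices a_1,...,a_n of the complete graph K_n defined by f(a_i) = 0 for i ≤ n-1 and f(a_n) = 1. Then the maximal function satisfies M_{K_n} f(a_i) = 1/n for i ≤ n-1 and M_{K_n} f(a_n) = 1, and consequently for every p > 0, Var_p(M_{K_n} f) = (1 - 1/n)·Var_p(f), so the constant 1 - 1/n in the p-variational inequality on K_n is sharp. -/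
/-!
The mass of `f` sits on the last vertex, so its mean is `1/n` and `M f` is `1/n` off that vertex
and `1` on it. A function that is constant off the last vertex has `p`-variation
`(n - 1)^(1/p)` times its jump there, and the jumps of `f` and `M f` are `1` and `1 - 1/n`.
-/

open Finset

/-- The Hardy–Littlewood maximal function on the complete graph `K_n`. -/
noncomputable def maxOpKn (n : ℕ) (f : Fin n → ℝ) (v : Fin n) : ℝ :=
  max |f v| ((∑ w : Fin n, |f w|) / n)

/-- The `p`-variation of a function on the vertices of `K_n`. -/
noncomputable def varpKn (n : ℕ) (p : ℝ) (g : Fin n → ℝ) : ℝ :=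
  (∑ v : Fin n, ∑ w ∈ univ.filter (fun w => v < w), |g v - g w| ^ p) ^ (1 / p)

section PiSingle

variable {n : ℕ} (j : Fin n) (c : ℝ)

lemma sum_abs_pi_single : ∑ w : Fin n, |Pi.single j c w| = |c| := by
  simp [Pi.single_apply, apply_ite]

lemma maxOpKn_pi_single_self : maxOpKn n (Pi.single j c) j = |c| := by
  have hn : (1 : ℝ) ≤ n := by exact_mod_cast j.pos
  rw [maxOpKn, sum_abs_pi_single, Pi.single_eq_same]
  exact max_eq_left (div_le_self (abs_nonneg c) hn)

lemma maxOpKn_pi_single_of_ne {v : Fin n} (hv : v ≠ j) :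
    maxOpKn n (Pi.single j c) v = |c| / n := by
  rw [maxOpKn, sum_abs_pi_single, Pi.single_eq_of_ne hv, abs_zero]
  exact max_eq_right (by positivity)

end PiSingle

lemma varpKn_of_eq_off_last {m : ℕ} {p : ℝ} (hp : p ≠ 0) {g : Fin (m + 1) → ℝ} {a : ℝ}
    (hg : ∀ i : Fin m, g i.castSucc = a) :
    varpKn (m + 1) p g = (m * |a - g (Fin.last m)| ^ p) ^ (1 / p) := by
  have hrow : ∀ i : Fin m,
      ∑ w ∈ univ.filter (fun w => i.castSucc < w), |g i.castSucc - g w| ^ p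
        = |a - g (Fin.last m)| ^ p := by
    intro i
    simp [sum_filter, Fin.sum_univ_castSucc, hg, Real.zero_rpow hp, Fin.castSucc_lt_last]
  rw [varpKn, Fin.sum_univ_castSucc]
  have hlast : univ.filter (fun w => Fin.last m < w) = ∅ :=
    filter_false_of_mem fun w _ => (Fin.le_last w).not_gt
  simp [hrow, hlast]

lemma rpow_mul_abs_rpow_one_div {c t p : ℝ} (hc : 0 ≤ c) (hp : p ≠ 0) :
    (c * |t| ^ p) ^ (1 / p) = |t| * c ^ (1 / p) := by
  rw [Real.mul_rpow hc (by positivity), one_div, Real.rpow_rpow_inv (abs_nonneg t) hp, mul_comm]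

theorem stmt16_general (n : ℕ)
    (f : Fin n → ℝ) (hf : f = fun i => if i.val = n - 1 then (1 : ℝ) else 0) :
    (∀ i : Fin n, i.val < n - 1 → maxOpKn n f i = 1 / n)
      ∧ (∀ i : Fin n, i.val = n - 1 → maxOpKn n f i = 1)
      ∧ ∀ p : ℝ, 0 < p →
          varpKn n p (maxOpKn n f) = (1 - 1 / (n : ℝ)) * varpKn n p f := by
  rcases n with _ | m
  · exact ⟨fun i => i.elim0, fun i => i.elim0, fun p hp => by simp [varpKn, hp.ne']⟩
  obtain rfl : f = Pi.single (Fin.last m) 1 := by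
    rw [hf]; funext i; simp [Pi.single_apply, Fin.ext_iff]
  have hM_last : maxOpKn (m + 1) (Pi.single (Fin.last m) 1) (Fin.last m) = 1 := by
    simpa using maxOpKn_pi_single_self (Fin.last m) (1 : ℝ)
  have hM_ne {i : Fin (m + 1)} (hi : i ≠ Fin.last m) :
      maxOpKn (m + 1) (Pi.single (Fin.last m) 1) i = 1 / (m + 1 : ℕ) := by
    simpa using maxOpKn_pi_single_of_ne (Fin.last m) (1 : ℝ) hi
  refine ⟨fun i hi => hM_ne (Fin.ne_of_val_ne (by rw [Fin.val_last]; omega)),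
    fun i hi => by rwa [show i = Fin.last m from Fin.ext (by rw [Fin.val_last]; omega)],
    fun p hp => ?_⟩
  have hjump : |1 / ((m + 1 : ℕ) : ℝ) - 1| = 1 - 1 / (m + 1 : ℕ) := by
    rw [abs_sub_comm, abs_of_nonneg (sub_nonneg.2 (div_le_one_of_le₀ (by simp) (by positivity)))]
  rw [varpKn_of_eq_off_last hp.ne' fun i => hM_ne (Fin.castSucc_ne_last i),
    varpKn_of_eq_off_last hp.ne' fun i => Pi.single_eq_of_ne (Fin.castSucc_ne_last i) _,
    hM_last, Pi.single_eq_same, rpow_mul_abs_rpow_one_div (Nat.cast_nonneg m) hp.ne',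
    rpow_mul_abs_rpow_one_div (Nat.cast_nonneg m) hp.ne', hjump]
  simp

theorem stmt16 (n : ℕ) (hn : 3 ≤ n)
    (f : Fin n → ℝ) (hf : f = fun i => if i.val = n - 1 then (1 : ℝ) else 0) :
    (∀ i : Fin n, i.val < n - 1 → maxOpKn n f i = 1 / n)
      ∧ (∀ i : Fin n, i.val = n - 1 → maxOpKn n f i = 1)
      ∧ ∀ p : ℝ, 0 < p →
          varpKn n p (maxOpKn n f) = (1 - 1 / (n : ℝ)) * varpKn n p f :=
  stmt16_general n f hf
end
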